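/- arXiv:0811.3852 — 6 statements merged into one kernel-verified Lean document; each statement's English description precedes it below -/
import Mathlib

section
/- Let $k$ be a field of characteristic $p > 0$ and $G$ a finite group with no nontrivial normal subgroup of $p$-power order. If $V$ is a faithful finite-dimensional representation of $G$ over $k$ and $\mathcal{F}: V = V_1 \supsetneq V_2 \supsetneq \dotsb \supsetneq V_r \supsetneq V_{r+1} = \{0\}$ is a $G$-stable flag, then the associated graded representation $\operatorname{gr}_{\mathcal{F}} V = \bigoplus_{i=1}^r V_i/V_{i+1}$ is also faithful. -/
/-- If `char k = p > 0`, `G` has no nontrivial normal subgroup of `p`-power order and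
`V` is a faithful representation of `G` with a `G`-stable flag
`V = V₁ ⊋ V₂ ⊋ ⋯ ⊋ V_{r+1} = 0`, then the associated graded representation
`⊕ Vᵢ/Vᵢ₊₁` is faithful: any `g` acting trivially on all the quotients is trivial. -/
theorem graded_of_flag_faithful (k : Type) [Field k] (p : ℕ) [hp : Fact p.Prime]
    [CharP k p] (G : Type) [Group G] [Finite G]
    (hG : ∀ N : Subgroup G, N.Normal → IsPGroup p N → N = ⊥)
    (V : Type) [AddCommGroup V] [Module k V] [FiniteDimensional k V]
    (ρ : Representation k G V) (hfaithful : Function.Injective ρ)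
    (r : ℕ) (F : Fin (r + 1) → Submodule k V)
    (hflag : StrictAnti F) (htop : F 0 = ⊤) (hbot : F (Fin.last r) = ⊥)
    (hstable : ∀ (g : G) (i : Fin (r + 1)), Submodule.map (ρ g) (F i) ≤ F i)
    (g : G)
    (hgr : ∀ i : Fin r, ∀ v ∈ F i.castSucc, ρ g v - v ∈ F i.succ) :
    g = 1 := by
  classical
  rcases subsingleton_or_nontrivial V with hV | hV
  · exact hfaithful (by ext v; exact Subsingleton.elim _ _)
  have hst : ∀ (h : G) (i : Fin (r+1)) (v : V), v ∈ F i → ρ h v ∈ F i :=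
    fun h i v hv => hstable h i ⟨v, hv, rfl⟩
  have hcancel : ∀ (a : G) (v : V), ρ a⁻¹ (ρ a v) = v := by
    intro a v
    rw [← Module.End.mul_apply, ← map_mul, inv_mul_cancel, map_one, Module.End.one_apply]
  set N : Subgroup G :=
    { carrier := {g | ∀ i : Fin r, ∀ v ∈ F i.castSucc, ρ g v - v ∈ F i.succ}
      one_mem' := by intro i v hv; simp
      mul_mem' := by
        intro a b ha hb i v hv
        have h1 : ρ b v ∈ F i.castSucc := hst b _ _ hv
        have h2 : ρ a (ρ b v) - ρ b v ∈ F i.succ := ha i _ h1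
        have h3 : ρ b v - v ∈ F i.succ := hb i v hv
        have heq : ρ (a*b) v - v = (ρ a (ρ b v) - ρ b v) + (ρ b v - v) := by
          simp [map_mul]
        rw [heq]; exact Submodule.add_mem _ h2 h3
      inv_mem' := by
        intro a ha i v hv
        have h3 : v - ρ a v ∈ F i.succ := by
          simpa using Submodule.neg_mem _ (ha i v hv)
        have key : ρ a⁻¹ (v - ρ a v) = ρ a⁻¹ v - v := by
          rw [map_sub, hcancel]
        rw [← key]
        exact hst a⁻¹ _ _ h3 } with hNdef
  have hmemN : ∀ a : G, a ∈ N ↔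
      ∀ i : Fin r, ∀ v ∈ F i.castSucc, ρ a v - v ∈ F i.succ := fun a => Iff.rfl
  have hnormal : N.Normal := by
    constructor
    intro a ha h i v hv
    have h1 : ρ h⁻¹ v ∈ F i.castSucc := hst h⁻¹ _ _ hv
    have h2 : ρ a (ρ h⁻¹ v) - ρ h⁻¹ v ∈ F i.succ := ha i _ h1
    have h3 : ρ h (ρ a (ρ h⁻¹ v) - ρ h⁻¹ v) ∈ F i.succ := hst h _ _ h2
    have heq : ρ (h * a * h⁻¹) v - v = ρ h (ρ a (ρ h⁻¹ v) - ρ h⁻¹ v) := by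
      rw [map_sub, map_mul, map_mul]
      simp only [Module.End.mul_apply]
      rw [show ρ h (ρ h⁻¹ v) = v by simpa using hcancel h⁻¹ v]
    rw [heq]; exact h3
  -- key nilpotency claim
  have claim : ∀ a ∈ N, ∀ j : ℕ, (hj : j ≤ r) → ∀ v : V,
      (((ρ a - 1 : Module.End k V)) ^ j) v ∈ F ⟨j, Nat.lt_succ_of_le hj⟩ := by
    intro a ha j
    induction j with
    | zero => intro hj v; simpa [htop] using Submodule.mem_top (x := v)
    | succ j ih =>
      intro hj v
      have hjr : j ≤ r := Nat.le_of_succ_le hj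
      have hw : ((ρ a - 1 : Module.End k V) ^ j) v ∈ F ⟨j, Nat.lt_succ_of_le hjr⟩ :=
        ih hjr v
      set w := ((ρ a - 1 : Module.End k V) ^ j) v with hwdef
      have hstep : ρ a w - w ∈ F ⟨j + 1, Nat.lt_succ_of_le hj⟩ := by
        have := ha ⟨j, lt_of_lt_of_le (Nat.lt_succ_self j) hj⟩ w (by
          convert hw using 2; rfl)
        convert this using 2; rfl
      have : ((ρ a - 1 : Module.End k V) ^ (j+1)) v = ρ a w - w := by
        rw [pow_succ', Module.End.mul_apply]
        simp [hwdef]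
      rw [this]; exact hstep
  have hpg : IsPGroup p N := by
    intro n
    refine ⟨r, ?_⟩
    obtain ⟨a, ha⟩ := n
    have hnil : ((ρ a - 1 : Module.End k V)) ^ r = 0 := by
      ext v
      have := claim a ha r le_rfl v
      rw [show (⟨r, Nat.lt_succ_self r⟩ : Fin (r+1)) = Fin.last r from rfl, hbot] at this
      simpa using this
    have hrle : r ≤ p ^ r := le_of_lt (Nat.lt_pow_self (n := r) hp.out.one_lt)
    have hnil2 : ((ρ a - 1 : Module.End k V)) ^ (p ^ r) = 0 := by
      rw [← Nat.sub_add_cancel hrle, pow_add, hnil, mul_zero]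
    haveI : Nontrivial (Module.End k V) := by
      obtain ⟨v, hv⟩ := exists_ne (0 : V)
      exact ⟨0, 1, fun hE => hv (by simpa using (LinearMap.congr_fun hE v).symm)⟩
    haveI : CharP (Module.End k V) p :=
      charP_of_injective_algebraMap (algebraMap k (Module.End k V)).injective p
    have hsub : ((ρ a : Module.End k V) - 1) ^ (p ^ r) =
        (ρ a : Module.End k V) ^ (p ^ r) - 1 ^ (p ^ r) :=
      sub_pow_char_pow_of_commute p r (Commute.one_right _)
    have : (ρ a : Module.End k V) ^ (p ^ r) = 1 := by
      have := hsub.symm.trans hnil2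
      rwa [one_pow, sub_eq_zero] at this
    have : ρ (a ^ (p ^ r)) = ρ 1 := by rw [map_pow, map_one, this]
    have ha1 : a ^ (p ^ r) = 1 := hfaithful this
    ext
    simpa using ha1
  have hg : g ∈ N := hgr
  rw [hG N hnormal hpg] at hg
  simpa using hg
end

section
/- Let $k$ be a field, $G$ a finite group, and $V = \bigoplus_{i=1}^m V_i$ a faithful completely reducible representation of $G$ over $k$ with each $V_i$ irreducible. Let $T_V \subseteq \operatorname{GL}(V)$ be the subgroup of automorphisms acting as a nonzero scalar on each $V_i$. Then $\rho_V(Z(G,k)) = T_V \cap \rho_V(G)$, where $Z(G,k) = \{g \in Z(G) \mid k \text{ contains a primitive root of unity of order } \operatorname{ord}(g)\}$. -/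
open Polynomial


/-- For a faithful completely reducible representation `V = ⊕ Vᵢ` (each `Vᵢ`
irreducible) of a finite group `G` over `k`, the image of the `k`-center
`Z(G,k) = {g ∈ Z(G) | ζ_{ord g} ∈ k}` equals `T_V ∩ ρ_V(G)`, where `T_V` is the group
of automorphisms acting as a nonzero scalar on each `Vᵢ`.  Elementwise: `g` lies in
`Z(G,k)` iff `ρ g` acts as a nonzero scalar on each `Vᵢ`. -/
theorem kCenter_eq_torus_inter_image (k : Type) [Field k] (G : Type) [Group G]
    [Finite G] (V : Type) [AddCommGroup V] [Module k V] [FiniteDimensional k V]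
    (ρ : Representation k G V) (hρ : Function.Injective ρ)
    (m : ℕ) (W : Fin m → Submodule k V)
    (hindep : iSupIndep W) (hsup : (⨆ i, W i) = ⊤)
    (hstable : ∀ (g : G) (i : Fin m), Submodule.map (ρ g) (W i) ≤ W i)
    (hirred : ∀ i, W i ≠ ⊥ ∧ ∀ U : Submodule k V, U ≤ W i →
      (∀ g : G, Submodule.map (ρ g) U ≤ U) → U = ⊥ ∨ U = W i) :
    ∀ g : G,
      (g ∈ Subgroup.center G ∧ ∃ ζ : k, IsPrimitiveRoot ζ (orderOf g)) ↔
        ∀ i, ∃ c : k, c ≠ 0 ∧ ∀ v ∈ W i, ρ g v = c • v := by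
  classical
  intro g
  have hN : 0 < orderOf g := orderOf_pos g
  set N := orderOf g with hNdef
  -- extensionality from the W i
  have ext_lemma : ∀ A B : V →ₗ[k] V, (∀ i, ∀ v ∈ W i, A v = B v) → A = B := by
    intro A B hAB
    ext v
    have hv : v ∈ ⨆ i, W i := hsup ▸ Submodule.mem_top
    refine Submodule.iSup_induction (motive := fun x => A x = B x) W hv
      (fun i x hx => hAB i x hx) (by simp) (fun x y hx hy => by simp [map_add, hx, hy])
  constructor
  · rintro ⟨hgZ, ζ, hζ⟩ i
    have hst : ∀ x ∈ W i, ρ g x ∈ W i := fun x hx =>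
      hstable g i (Submodule.mem_map_of_mem hx)
    set φ : Module.End k (W i) := (ρ g).restrict hst with hφdef
    have hρgN : (ρ g : V →ₗ[k] V) ^ N = 1 := by
      rw [← map_pow, pow_orderOf_eq_one, map_one]
    have hφN : φ ^ N = 1 := by
      rw [hφdef, Module.End.pow_restrict]
      ext x
      simp [LinearMap.restrict_apply, hρgN]
    have haeval : (aeval φ) (X ^ N - 1 : k[X]) = 0 := by
      simp [map_sub, map_pow, hφN]
    rw [X_pow_sub_one_eq_prod hN hζ] at haeval
    have key : ∀ s : Finset k, (∀ μ ∈ s, Function.Injective ((aeval φ) (X - C μ))) →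
        Function.Injective ((aeval φ) (∏ μ ∈ s, (X - C μ))) := by
      intro s
      induction s using Finset.induction_on with
      | empty =>
        intro _
        simp only [Finset.prod_empty, map_one]
        intro a b h
        simpa [Module.End.one_apply] using h
      | @insert a s hnotmem ih =>
        intro hins
        rw [Finset.prod_insert hnotmem, map_mul]
        intro x y hxy
        exact ih (fun μ hμ => hins μ (Finset.mem_insert_of_mem hμ))
          (hins a (Finset.mem_insert_self _ _) (by simpa [Module.End.mul_apply] using hxy))
    -- find a non-injective factor
    have hnontriv : ∃ x : W i, x ≠ 0 := by
      obtain ⟨x, hx, hx0⟩ := Submodule.ne_bot_iff (W i) |>.mp (hirred i).1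
      exact ⟨⟨x, hx⟩, fun h => hx0 (congrArg Subtype.val h)⟩
    obtain ⟨x0, hx0⟩ := hnontriv
    have hexists : ∃ μ ∈ nthRootsFinset N (1 : k), ¬ Function.Injective ((aeval φ) (X - C μ)) := by
      by_contra hcon
      push_neg at hcon
      have hinj := key _ hcon
      rw [haeval] at hinj
      exact hx0 (hinj (by simp))
    obtain ⟨μ, hμmem, hμnotinj⟩ := hexists
    have hμroot : μ ^ N = 1 := (mem_nthRootsFinset hN (1 : k)).mp hμmem
    have hμne : μ ≠ 0 := by
      rintro rfl
      simp [zero_pow hN.ne'] at hμroot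
    -- eigenvector
    have haevalX : (aeval φ) (X - C μ : k[X]) = φ - algebraMap k _ μ := by
      simp [map_sub]
    rw [haevalX] at hμnotinj
    rw [← LinearMap.ker_eq_bot] at hμnotinj
    obtain ⟨w, hwker, hwne⟩ := Submodule.ne_bot_iff _ |>.mp hμnotinj
    have hweig : ρ g (w : V) = μ • (w : V) := by
      have : φ w - μ • w = 0 := by
        simpa [LinearMap.sub_apply, Module.algebraMap_end_apply] using hwker
      have h2 : φ w = μ • w := by rwa [sub_eq_zero] at this
      have h3 := congrArg Subtype.val h2
      simpa [hφdef, LinearMap.restrict_apply] using h3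
    -- the eigenspace inside W i
    set E : Submodule k V := W i ⊓ LinearMap.ker ((ρ g : V →ₗ[k] V) - μ • LinearMap.id) with hEdef
    have hmemE : ∀ v : V, v ∈ E ↔ v ∈ W i ∧ ρ g v = μ • v := by
      intro v
      simp [hEdef, LinearMap.mem_ker, sub_eq_zero, LinearMap.sub_apply]
    have hEne : E ≠ ⊥ := by
      rw [Submodule.ne_bot_iff]
      refine ⟨(w : V), (hmemE _).mpr ⟨w.2, hweig⟩, ?_⟩
      exact fun h => hwne (Subtype.ext h)
    have hEstable : ∀ h : G, Submodule.map (ρ h) E ≤ E := by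
      intro h
      rintro _ ⟨v, hv, rfl⟩
      obtain ⟨hv1, hv2⟩ := (hmemE v).mp hv
      refine (hmemE _).mpr ⟨hstable h i (Submodule.mem_map_of_mem hv1), ?_⟩
      have hcomm : g * h = h * g := ((Subgroup.mem_center_iff.mp hgZ) h).symm
      calc ρ g (ρ h v) = ρ (g * h) v := by rw [map_mul]; rfl
        _ = ρ (h * g) v := by rw [hcomm]
        _ = ρ h (ρ g v) := by rw [map_mul]; rfl
        _ = ρ h (μ • v) := by rw [hv2]
        _ = μ • ρ h v := map_smul _ _ _
    rcases (hirred i).2 E inf_le_left hEstable with hE | hE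
    · exact absurd hE hEne
    · exact ⟨μ, hμne, fun v hv => ((hmemE v).mp (hE ▸ hv : v ∈ E)).2⟩
  · intro hsc
    choose c hc0 hc using hsc
    -- g is central
    have hgZ : g ∈ Subgroup.center G := by
      rw [Subgroup.mem_center_iff]
      intro h
      apply hρ
      apply ext_lemma
      intro i v hv
      have hW : ρ h v ∈ W i := hstable h i (Submodule.mem_map_of_mem hv)
      calc ρ (h * g) v = ρ h (ρ g v) := by rw [map_mul]; rfl
        _ = ρ h (c i • v) := by rw [hc i v hv]
        _ = c i • ρ h v := map_smul _ _ _
        _ = ρ g (ρ h v) := (hc i _ hW).symm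
        _ = ρ (g * h) v := by rw [map_mul]; rfl
    -- action of powers of g
    have hpow : ∀ (n : ℕ) (i : Fin m), ∀ v ∈ W i, ρ (g ^ n) v = c i ^ n • v := by
      intro n
      induction n with
      | zero => intro i v hv; simp
      | succ n ih =>
        intro i v hv
        have hvn : c i ^ n • v ∈ W i := Submodule.smul_mem _ _ hv
        calc ρ (g ^ (n + 1)) v = ρ (g * g ^ n) v := by rw [pow_succ']
          _ = ρ g (ρ (g ^ n) v) := by rw [map_mul]; rfl
          _ = ρ g (c i ^ n • v) := by rw [ih i v hv]
          _ = c i • c i ^ n • v := hc i _ hvn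
          _ = c i ^ (n + 1) • v := by rw [smul_smul, ← pow_succ']
    -- each c i is an N-th root of unity
    have hcN : ∀ i, c i ^ N = 1 := by
      intro i
      obtain ⟨v, hv, hv0⟩ := Submodule.ne_bot_iff (W i) |>.mp (hirred i).1
      have := hpow N i v hv
      rw [pow_orderOf_eq_one, map_one] at this
      have h2 : (c i ^ N - 1) • v = 0 := by
        rw [sub_smul, one_smul, ← this]; simp
      rcases smul_eq_zero.mp h2 with h | h
      · exact sub_eq_zero.mp h
      · exact absurd h hv0
    -- package the c i as roots of unity
    have humem : ∀ i, Units.mk0 (c i) (hc0 i) ∈ rootsOfUnity N k := by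
      intro i
      rw [mem_rootsOfUnity']
      exact hcN i
    have hNZ : NeZero N := ⟨hN.ne'⟩
    obtain ⟨ζ, hζgen⟩ := IsCyclic.exists_generator (α := rootsOfUnity N k)
    set e := orderOf ζ with he
    have hce : ∀ i, c i ^ e = 1 := by
      intro i
      obtain ⟨n, hn⟩ := hζgen ⟨Units.mk0 (c i) (hc0 i), humem i⟩
      have hx : (⟨Units.mk0 (c i) (hc0 i), humem i⟩ : rootsOfUnity N k) ^ e = 1 := by
        rw [← hn, ← zpow_natCast, ← zpow_mul, mul_comm, zpow_mul, zpow_natCast,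
          pow_orderOf_eq_one, one_zpow]
      have h2 := congrArg (fun z : rootsOfUnity N k => ((z : kˣ) : k)) hx
      simpa using h2
    have hζN : ζ ^ N = 1 := by
      apply Subtype.ext
      push_cast
      exact (mem_rootsOfUnity N _).mp ζ.2
    have heN : e ∣ N := orderOf_dvd_of_pow_eq_one hζN
    have hNe : N ∣ e := by
      apply orderOf_dvd_of_pow_eq_one
      apply hρ
      apply ext_lemma
      intro i v hv
      rw [hpow e i v hv, hce i, one_smul, map_one]
      exact (Module.End.one_apply v).symm
    have heqN : e = N := Nat.dvd_antisymm heN hNe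
    refine ⟨hgZ, ((ζ : kˣ) : k), ?_, ?_⟩
    · exact (mem_rootsOfUnity' N _).mp ζ.2
    · intro l hl
      have h1 : (ζ : kˣ) ^ l = 1 := by
        apply Units.ext
        push_cast
        exact hl
      have h2 : ζ ^ l = 1 := by
        apply Subtype.ext
        push_cast
        exact h1
      exact heqN ▸ orderOf_dvd_of_pow_eq_one h2
end

section
/- Let $G$ be a finite group, $k$ a field, $A = \operatorname{soc}^{ab}(G)$ with $\operatorname{char} k \nmid |A|$, and $V = \bigoplus_{i=1}^m V_i$ a representation of $G$ over $k$ with each $V_i$ irreducible. For each $i$ choose a character $\chi_i \in A^* = \operatorname{Hom}(A, \bar{k}^*)$ appearing in the restriction $(V_i \otimes \bar{k})|_A$. Then $V$ is faithful if and only if the characters $\chi_1, \dotsc, \chi_m$ generate $A^*$ as a $\mathbb{Z}G$-module and no non-abelian minimal normal subgroup of $G$ is contained in the kernel of $V$. -/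
open scoped TensorProduct

/-- A foot of `G` is a minimal nontrivial normal subgroup. -/
def IsFoot {G : Type} [Group G] (N : Subgroup G) : Prop :=
  N.Normal ∧ N ≠ ⊥ ∧ ∀ M : Subgroup G, M.Normal → M ≠ ⊥ → M ≤ N → M = N

/-- The abelian socle of `G`: the subgroup generated by all abelian feet. -/
def abSocle (G : Type) [Group G] : Subgroup G :=
  ⨆ N ∈ {N : Subgroup G | IsFoot N ∧ ∀ a ∈ N, ∀ b ∈ N, a * b = b * a}, N

/-- `ℓ' = g • ℓ` for characters of the abelian socle, i.e. `ℓ'(a) = ℓ(g⁻¹ a g)`. -/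
def IsConjChar (k : Type) [Field k] {G : Type} [Group G] (g : G)
    (ℓ ℓ' : ↥(abSocle G) →* (AlgebraicClosure k)ˣ) : Prop :=
  ∀ (a : G) (ha : a ∈ abSocle G) (ha' : g⁻¹ * a * g ∈ abSocle G),
    ℓ' ⟨a, ha⟩ = ℓ ⟨g⁻¹ * a * g, ha'⟩

section GroupAux
variable {G : Type} [Group G]

lemma IsFoot.map_equiv {N : Subgroup G} (h : IsFoot N) (e : G ≃* G) :
    IsFoot (N.map e.toMonoidHom) := by
  obtain ⟨hn, hb, hmin⟩ := h
  refine ⟨hn.map e.toMonoidHom e.surjective, ?_, ?_⟩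
  · rwa [Ne, Subgroup.map_eq_bot_iff_of_injective _ e.injective]
  · intro M hMn hMb hle
    have hle' : M.map e.symm.toMonoidHom ≤ N := by
      intro x hx
      obtain ⟨y, hy, rfl⟩ := hx
      obtain ⟨z, hz, rfl⟩ := hle hy
      simpa using hz
    have := hmin _ (hMn.map e.symm.toMonoidHom e.symm.surjective)
      (by rwa [Ne, Subgroup.map_eq_bot_iff_of_injective _ e.symm.injective]) hle'
    ext x
    rw [Subgroup.mem_map_equiv, ← this, Subgroup.mem_map_equiv]
    simp

lemma foot_comm {M N : Subgroup G} (hM : IsFoot M) (hMab : ∀ a ∈ M, ∀ b ∈ M, a * b = b * a)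
    (hN : IsFoot N) {x y : G} (hx : x ∈ M) (hy : y ∈ N) : x * y = y * x := by
  by_cases hMN : M = N
  · exact hMab x hx y (hMN ▸ hy)
  · have hinf : M ⊓ N = ⊥ := by
      by_contra hne
      have hnorm : (M ⊓ N).Normal := by
        constructor
        intro n hn g
        exact Subgroup.mem_inf.mpr ⟨hM.1.conj_mem n (Subgroup.mem_inf.mp hn).1 g,
          hN.1.conj_mem n (Subgroup.mem_inf.mp hn).2 g⟩
      have h1 : M ⊓ N = M := hM.2.2 _ hnorm hne inf_le_left
      have h2 : M ≤ N := inf_eq_left.mp h1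
      exact hMN (hN.2.2 M hM.1 hM.2.1 h2)
    have hc : x⁻¹ * y⁻¹ * x * y = 1 := by
      have h1 : x⁻¹ * y⁻¹ * x * y ∈ M := by
        have h' : y⁻¹ * x * y⁻¹⁻¹ ∈ M := hM.1.conj_mem x hx y⁻¹
        rw [inv_inv] at h'
        have h'' := mul_mem (inv_mem hx) h'
        convert h'' using 1; group
      have h2 : x⁻¹ * y⁻¹ * x * y ∈ N := by
        have h' : x⁻¹ * y⁻¹ * x⁻¹⁻¹ ∈ N := hN.1.conj_mem y⁻¹ (inv_mem hy) x⁻¹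
        rw [inv_inv] at h'
        exact mul_mem h' hy
      have hmem : x⁻¹ * y⁻¹ * x * y ∈ M ⊓ N := Subgroup.mem_inf.mpr ⟨h1, h2⟩
      rwa [hinf, Subgroup.mem_bot] at hmem
    have h := congrArg (fun t => y * x * t) hc
    simp only [mul_one] at h
    rw [show y * x * (x⁻¹ * y⁻¹ * x * y) = x * y by group] at h
    exact h

lemma abSocle_comm : ∀ a ∈ abSocle G, ∀ b ∈ abSocle G, a * b = b * a := by
  set S := {N : Subgroup G | IsFoot N ∧ ∀ a ∈ N, ∀ b ∈ N, a * b = b * a} with hS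
  intro a ha
  refine Subgroup.iSup_induction (C := fun a => ∀ b ∈ abSocle G, a * b = b * a) _ ha ?_ ?_ ?_
  · intro N a haN
    by_cases hN : N ∈ S
    · rw [iSup_pos hN] at haN
      intro b hb
      refine Subgroup.iSup_induction (C := fun b => a * b = b * a) _ hb ?_ (by simp) ?_
      · intro M b hbM
        by_cases hM : M ∈ S
        · rw [iSup_pos hM] at hbM
          exact foot_comm hN.1 hN.2 hM.1 haN hbM
        · rw [iSup_neg hM, Subgroup.mem_bot] at hbM
          simp [hbM]
      · intro x y hx hy
        rw [← mul_assoc, hx, mul_assoc, hy, mul_assoc]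
    · rw [iSup_neg hN, Subgroup.mem_bot] at haN
      simp [haN]
  · intro b hb; simp
  · intro x y hx hy b hb
    rw [mul_assoc, hy b hb, ← mul_assoc, hx b hb, mul_assoc]

instance abSocle_normal : (abSocle G).Normal := by
  constructor
  intro x hx g
  unfold abSocle at hx ⊢
  refine Subgroup.iSup_induction _ (C := fun y => g * y * g⁻¹ ∈
    ⨆ N ∈ {N : Subgroup G | IsFoot N ∧ ∀ a ∈ N, ∀ b ∈ N, a * b = b * a}, N) hx ?_
    (by simpa using one_mem _) ?_
  · intro N x hx
    by_cases hN : N ∈ {N : Subgroup G | IsFoot N ∧ ∀ a ∈ N, ∀ b ∈ N, a * b = b * a}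
    · rw [iSup_pos hN] at hx
      have hmem : N.map (MulAut.conj g).toMonoidHom ∈
          {N : Subgroup G | IsFoot N ∧ ∀ a ∈ N, ∀ b ∈ N, a * b = b * a} := by
        refine ⟨hN.1.map_equiv _, ?_⟩
        rintro a ⟨a', ha', rfl⟩ b ⟨b', hb', rfl⟩
        rw [← map_mul, ← map_mul, hN.2 a' ha' b' hb']
      have hle : N.map (MulAut.conj g).toMonoidHom ≤
          ⨆ N ∈ {N : Subgroup G | IsFoot N ∧ ∀ a ∈ N, ∀ b ∈ N, a * b = b * a}, N :=
        le_iSup₂ (f := fun (N : Subgroup G) (_ : _) => N) _ hmem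
      exact hle ⟨x, hx, by simp [MulAut.conj_apply]⟩
    · rw [iSup_neg hN, Subgroup.mem_bot] at hx
      simpa [hx] using one_mem _
  · intro x y hx hy
    have h : g * (x * y) * g⁻¹ = (g * x * g⁻¹) * (g * y * g⁻¹) := by group
    rw [h]
    exact mul_mem hx hy

lemma abelian_foot_le_abSocle {N : Subgroup G} (h : IsFoot N)
    (hab : ∀ a ∈ N, ∀ b ∈ N, a * b = b * a) : N ≤ abSocle G :=
  le_iSup₂ (f := fun (N : Subgroup G) (_ : _) => N) N ⟨h, hab⟩

lemma exists_foot_le [Finite G] (K : Subgroup G) (hn : K.Normal) (hb : K ≠ ⊥) :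
    ∃ N, IsFoot N ∧ N ≤ K := by
  have hcard : ∀ n (K : Subgroup G), K.Normal → K ≠ ⊥ → Nat.card K ≤ n →
      ∃ N, IsFoot N ∧ N ≤ K := by
    intro n
    induction n with
    | zero =>
      intro K _ _ hle
      have := Nat.card_pos (α := ↥K)
      omega
    | succ n ih =>
      intro K hn hb hle
      by_cases hfoot : ∀ M : Subgroup G, M.Normal → M ≠ ⊥ → M ≤ K → M = K
      · exact ⟨K, ⟨hn, hb, hfoot⟩, le_rfl⟩
      · push_neg at hfoot
        obtain ⟨M, hMn, hMb, hMle, hMne⟩ := hfoot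
        have hlt : Nat.card M < Nat.card K := by
          rcases lt_or_ge (Nat.card M) (Nat.card K) with h | h
          · exact h
          · exact absurd (Subgroup.eq_of_le_of_card_ge hMle h) hMne
        obtain ⟨N, hN, hNle⟩ := ih M hMn hMb (by omega)
        exact ⟨N, hN, hNle.trans hMle⟩
  exact hcard (Nat.card K) K hn hb le_rfl

end GroupAux

section BaseChangeAux
set_option linter.unusedSectionVars false
open TensorProduct
variable {k K V U : Type} [Field k] [CommRing K] [Algebra k K] [Module.Flat k K]
  [AddCommGroup V] [Module k V] [AddCommGroup U] [Module k U]

lemma range_subtype_baseChange (p : Submodule k V) :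
    LinearMap.range ((p.subtype).baseChange K) = p.baseChange K := by
  apply le_antisymm
  · rintro _ ⟨x, rfl⟩
    induction x using TensorProduct.induction_on with
    | zero => simp
    | tmul a w => simpa using Submodule.tmul_mem_baseChange_of_mem a w.2
    | add x y hx hy => rw [map_add]; exact add_mem hx hy
  · rw [Submodule.baseChange_eq_span, Submodule.span_le]
    rintro _ ⟨m, hm, rfl⟩
    exact ⟨1 ⊗ₜ ⟨m, hm⟩, by simp⟩

lemma ker_baseChange' (f : V →ₗ[k] U) :
    LinearMap.ker (f.baseChange K) = (LinearMap.ker f).baseChange K := by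
  have hex : Function.Exact ((LinearMap.ker f).subtype.baseChange K) (f.baseChange K) := by
    have h := Module.Flat.lTensor_exact (M := K) (R := k) f.exact_subtype_ker_map
    rwa [← LinearMap.baseChange_eq_ltensor, ← LinearMap.baseChange_eq_ltensor] at h
  rw [LinearMap.exact_iff] at hex
  rw [hex, range_subtype_baseChange]

lemma baseChange_mono {p q : Submodule k V} (h : p ≤ q) :
    p.baseChange K ≤ q.baseChange K := by
  rw [Submodule.baseChange_eq_span, Submodule.baseChange_eq_span]
  exact Submodule.span_mono (by exact Submodule.map_mono h)

lemma map_baseChange (f : V →ₗ[k] U) (p : Submodule k V) :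
    Submodule.map (f.baseChange K) (p.baseChange K) = (p.map f).baseChange K := by
  rw [Submodule.baseChange_eq_span, Submodule.baseChange_eq_span, Submodule.map_span]
  congr 1
  ext x
  constructor
  · rintro ⟨_, ⟨m, hm, rfl⟩, rfl⟩
    exact ⟨f m, ⟨m, hm, rfl⟩, by simp⟩
  · rintro ⟨_, ⟨m, hm, rfl⟩, rfl⟩
    exact ⟨1 ⊗ₜ m, ⟨m, hm, rfl⟩, by simp⟩

lemma mem_baseChange_inf_ker {p : Submodule k V} {g : V →ₗ[k] U} {u : K ⊗[k] V}
    (hu : u ∈ p.baseChange K) (hg : g.baseChange K u = 0) :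
    u ∈ (p ⊓ LinearMap.ker g).baseChange K := by
  rw [← range_subtype_baseChange] at hu
  obtain ⟨w, rfl⟩ := hu
  have hw : (g ∘ₗ p.subtype).baseChange K w = 0 := by
    rw [LinearMap.baseChange_comp]
    simpa using hg
  rw [← LinearMap.mem_ker, ker_baseChange'] at hw
  have hmem : (p.subtype.baseChange K) w ∈
      ((LinearMap.ker (g ∘ₗ p.subtype)).map p.subtype).baseChange K := by
    rw [← map_baseChange]
    exact Submodule.mem_map_of_mem hw
  refine baseChange_mono ?_ hmem
  rintro _ ⟨⟨x, hx⟩, hker, rfl⟩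
  have hx0 : g x = 0 := by simpa using hker
  exact Submodule.mem_inf.mpr ⟨hx, hx0⟩

lemma mem_baseChange_inf_iInf_ker {ι : Type} [Fintype ι] (p : Submodule k V)
    (f : ι → (V →ₗ[k] U)) {u : K ⊗[k] V} (hu : u ∈ p.baseChange K)
    (hf : ∀ i, (f i).baseChange K u = 0) :
    u ∈ (p ⊓ ⨅ i, LinearMap.ker (f i)).baseChange K := by
  classical
  have key : ∀ s : Finset ι, u ∈ (p ⊓ ⨅ i ∈ s, LinearMap.ker (f i)).baseChange K := by
    intro s
    induction s using Finset.induction_on with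
    | empty => simpa using hu
    | @insert a s ha ih =>
      have h2 := mem_baseChange_inf_ker ih (hf a)
      have heq : (p ⊓ ⨅ i ∈ s, LinearMap.ker (f i)) ⊓ LinearMap.ker (f a)
          = p ⊓ ⨅ i ∈ insert a s, LinearMap.ker (f i) := by
        rw [Finset.iInf_insert, inf_assoc,
          inf_comm (⨅ i ∈ s, LinearMap.ker (f i)) (LinearMap.ker (f a))]
      rwa [heq] at h2
  have h := key Finset.univ
  simpa using h
end BaseChangeAux

/-- Faithfulness criterion: a completely reducible representation `V = ⊕ Vᵢ` with
`Vᵢ` irreducible, where `χᵢ` is a character of `A = soc^ab(G)` appearing in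
`(Vᵢ ⊗ k̄)|_A`, is faithful iff the `χᵢ` generate `A*` as a `ℤG`-module and no
non-abelian foot of `G` lies in the kernel of `V`. -/
theorem faithful_iff_socle_chars_generate (k : Type) [Field k] (G : Type) [Group G]
    [Finite G] (hA : (Nat.card ↥(abSocle G) : k) ≠ 0)
    (V : Type) [AddCommGroup V] [Module k V] [FiniteDimensional k V]
    (ρ : Representation k G V)
    (m : ℕ) (W : Fin m → Submodule k V)
    (hindep : iSupIndep W) (hsup : (⨆ i, W i) = ⊤)
    (hstable : ∀ (g : G) (i : Fin m), Submodule.map (ρ g) (W i) ≤ W i)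
    (hirred : ∀ i, W i ≠ ⊥ ∧ ∀ U : Submodule k V, U ≤ W i →
      (∀ g : G, Submodule.map (ρ g) U ≤ U) → U = ⊥ ∨ U = W i)
    (χ : Fin m → (↥(abSocle G) →* (AlgebraicClosure k)ˣ))
    (hχ : ∀ i, ∃ v : AlgebraicClosure k ⊗[k] V,
      v ∈ Submodule.baseChange (AlgebraicClosure k) (W i) ∧ v ≠ 0 ∧
        ∀ a : ↥(abSocle G),
          LinearMap.baseChange (AlgebraicClosure k) (ρ (a : G)) v = (χ i a : AlgebraicClosure k) • v) :
    Function.Injective ρ ↔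
      (Subgroup.closure {ℓ' | ∃ i, ∃ g : G, IsConjChar k g (χ i) ℓ'} = ⊤ ∧
        ∀ N : Subgroup G, IsFoot N → ¬ (∀ a ∈ N, ∀ b ∈ N, a * b = b * a) →
          ∃ x ∈ N, ρ x ≠ 1) := by
  classical
  letI : CommGroup ↥(abSocle G) := { (inferInstance : Group ↥(abSocle G)) with
    mul_comm := fun a b => Subtype.ext (abSocle_comm (a : G) a.2 (b : G) b.2) }
  -- kernel of ρ as a subgroup
  let kerρ : Subgroup G :=
    { carrier := {x | ρ x = 1}
      one_mem' := map_one ρ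
      mul_mem' := by
        intro a b ha hb
        show ρ (a * b) = 1
        rw [map_mul, ha, hb, one_mul]
      inv_mem' := by
        intro a ha
        show ρ a⁻¹ = 1
        have h1 : ρ a⁻¹ * ρ a = 1 := by rw [← map_mul, inv_mul_cancel, map_one]
        have h2 : ρ a = 1 := ha
        rw [h2, mul_one] at h1
        exact h1 }
  have hker_normal : kerρ.Normal := by
    constructor
    intro n hn g
    show ρ (g * n * g⁻¹) = 1
    have hn' : ρ n = 1 := hn
    rw [map_mul, map_mul, hn', mul_one, ← map_mul, mul_inv_cancel, map_one]
  -- conjugation on A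
  have hconjmem : ∀ (g x : G), x ∈ abSocle G → g⁻¹ * x * g ∈ abSocle G := by
    intro g x hx
    have h := (abSocle_normal (G := G)).conj_mem x hx g⁻¹
    simpa using h
  let φg : G → (↥(abSocle G) →* ↥(abSocle G)) := fun g =>
    { toFun := fun a => ⟨g⁻¹ * (a : G) * g, hconjmem g _ a.2⟩
      map_one' := by ext; simp
      map_mul' := fun a b => by
        ext
        show g⁻¹ * ((a : G) * b) * g = (g⁻¹ * (a : G) * g) * (g⁻¹ * (b : G) * g)
        group }
  let Cg : G → ((↥(abSocle G) →* (AlgebraicClosure k)ˣ) →*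
      (↥(abSocle G) →* (AlgebraicClosure k)ˣ)) := fun g =>
    { toFun := fun ℓ => ℓ.comp (φg g)
      map_one' := rfl
      map_mul' := fun ℓ₁ ℓ₂ => rfl }
  set S := {ℓ' : ↥(abSocle G) →* (AlgebraicClosure k)ˣ | ∃ i, ∃ g : G, IsConjChar k g (χ i) ℓ'}
    with hSdef
  set H := Subgroup.closure S with hHdef
  -- χ i itself is in S (take g = 1)
  have hχS : ∀ i, χ i ∈ S := by
    intro i
    refine ⟨i, 1, fun a ha ha' => ?_⟩
    exact congrArg (χ i) (Subtype.ext (by group))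
  have hχH : ∀ i, χ i ∈ H := fun i => Subgroup.subset_closure (hχS i)
  -- S is stable under the conjugation action
  have hSstable : ∀ (g : G) (ℓ' : ↥(abSocle G) →* (AlgebraicClosure k)ˣ),
      ℓ' ∈ S → Cg g ℓ' ∈ S := by
    rintro g ℓ' ⟨i, g₀, hℓ'⟩
    refine ⟨i, g * g₀, fun a ha ha' => ?_⟩
    have h1 := hℓ' (g⁻¹ * a * g) (hconjmem g a ha) (hconjmem g₀ _ (hconjmem g a ha))
    show ℓ' ⟨g⁻¹ * a * g, _⟩ = _
    rw [h1]
    exact congrArg (χ i) (Subtype.ext (by group))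
  have hHstable : ∀ (g : G) (ℓ : ↥(abSocle G) →* (AlgebraicClosure k)ˣ),
      ℓ ∈ H → Cg g ℓ ∈ H := by
    intro g ℓ hℓ
    have hmap : Subgroup.map (Cg g) H ≤ H := by
      rw [hHdef, MonoidHom.map_closure]
      refine (Subgroup.closure_le _).mpr ?_
      rintro ℓ'' ⟨ℓ', hℓ', rfl⟩
      exact Subgroup.subset_closure (hSstable g ℓ' hℓ')
    exact hmap (Subgroup.mem_map_of_mem _ hℓ)
  -- χ i kills A ∩ ker ρ
  have hχker : ∀ (i : Fin m) (x : ↥(abSocle G)), (x : G) ∈ kerρ → χ i x = 1 := by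
    intro i x hx
    obtain ⟨v, hvW, hv0, hveig⟩ := hχ i
    have h := hveig x
    have hx1 : ρ (x : G) = 1 := hx
    rw [hx1, LinearMap.baseChange_one] at h
    have h2 : ((χ i x : AlgebraicClosure k) - 1) • v = 0 := by
      have e : ((χ i x : AlgebraicClosure k) - 1) • v = (χ i x : AlgebraicClosure k) • v - (1 : AlgebraicClosure k) • v := sub_smul (R := AlgebraicClosure k) (M := AlgebraicClosure k ⊗[k] V) _ _ _
      rw [e, one_smul, ← h]
      simp
    rcases smul_eq_zero.mp h2 with h3 | h3
    · have : (χ i x : AlgebraicClosure k) = 1 := by linear_combination h3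
      exact Units.ext this
    · exact absurd h3 hv0
  -- every element of H kills A ∩ ker ρ
  have hHker : ∀ (x : G) (hxA : x ∈ abSocle G), x ∈ kerρ → ∀ ℓ ∈ H, ℓ ⟨x, hxA⟩ = 1 := by
    intro x hxA hxk ℓ hℓ
    refine Subgroup.closure_induction ?_ ?_ ?_ ?_ hℓ
    · rintro ℓ' ⟨i, g, hℓ'⟩
      have hxA' := hconjmem g x hxA
      rw [hℓ' x hxA hxA']
      refine hχker i ⟨g⁻¹ * x * g, hxA'⟩ ?_
      have h := hker_normal.conj_mem x hxk g⁻¹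
      simpa using h
    · rfl
    · intro ℓ₁ ℓ₂ _ _ h1 h2
      show ℓ₁ _ * ℓ₂ _ = 1
      rw [h1, h2, one_mul]
    · intro ℓ₁ _ h1
      show (ℓ₁ _)⁻¹ = 1
      rw [h1, inv_one]
  -- roots of unity instances
  have hcardA : ((Nat.card ↥(abSocle G) : AlgebraicClosure k)) ≠ 0 := by
    intro h0
    apply hA
    have h1 : (algebraMap k (AlgebraicClosure k)) ((Nat.card ↥(abSocle G) : k)) = 0 := by
      rw [map_natCast]; exact h0
    exact (map_eq_zero_iff _ (algebraMap k (AlgebraicClosure k)).injective).mp h1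
  haveI hne : NeZero ((Monoid.exponent ↥(abSocle G) : AlgebraicClosure k)) := by
    constructor
    obtain ⟨c, hc⟩ := Group.exponent_dvd_nat_card (G := ↥(abSocle G))
    intro h0
    apply hcardA
    rw [hc, Nat.cast_mul, h0, zero_mul]
  obtain ⟨eA⟩ := CommGroup.monoidHom_mulEquiv_of_hasEnoughRootsOfUnity
    (↥(abSocle G)) (AlgebraicClosure k)
  haveI : Finite (↥(abSocle G) →* (AlgebraicClosure k)ˣ) := Finite.of_equiv _ eA.symm.toEquiv
  have hcard_dual : Nat.card (↥(abSocle G) →* (AlgebraicClosure k)ˣ) = Nat.card ↥(abSocle G) :=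
    Nat.card_congr eA.toEquiv
  constructor
  · intro hinj
    have hker_bot : ∀ x : G, ρ x = 1 → x = 1 := fun x hx =>
      hinj (a₁ := x) (a₂ := 1) (by rw [map_one]; exact hx)
    constructor
    · -- the conjugate characters generate
      let B : Subgroup G :=
        { carrier := {x | ∃ hx : x ∈ abSocle G, ∀ ℓ ∈ H, ℓ ⟨x, hx⟩ = 1}
          one_mem' := ⟨one_mem _, fun ℓ _ => by
            rw [show (⟨1, one_mem _⟩ : ↥(abSocle G)) = 1 from rfl, map_one]⟩
          mul_mem' := @fun a b ha hb => by
            obtain ⟨ha', hfa⟩ := ha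
            obtain ⟨hb', hfb⟩ := hb
            refine ⟨mul_mem ha' hb', fun ℓ hℓ => ?_⟩
            rw [show (⟨a * b, mul_mem ha' hb'⟩ : ↥(abSocle G)) = ⟨a, ha'⟩ * ⟨b, hb'⟩ from rfl,
              map_mul, hfa ℓ hℓ, hfb ℓ hℓ, one_mul]
          inv_mem' := @fun a ha => by
            obtain ⟨ha', hfa⟩ := ha
            refine ⟨inv_mem ha', fun ℓ hℓ => ?_⟩
            rw [show (⟨a⁻¹, inv_mem ha'⟩ : ↥(abSocle G)) = (⟨a, ha'⟩ : ↥(abSocle G))⁻¹ from rfl,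
              map_inv, hfa ℓ hℓ, inv_one] }
      have hBnormal : B.Normal := by
        constructor
        rintro x ⟨hxA, hxf⟩ g
        have hgA : g * x * g⁻¹ ∈ abSocle G := (abSocle_normal).conj_mem x hxA g
        refine ⟨hgA, fun ℓ hℓ => ?_⟩
        have h1 := hxf (Cg g⁻¹ ℓ) (hHstable g⁻¹ ℓ hℓ)
        have h2 : (Cg g⁻¹ ℓ) ⟨x, hxA⟩ = ℓ ⟨g * x * g⁻¹, hgA⟩ := by
          show ℓ (φg g⁻¹ ⟨x, hxA⟩) = _
          congr 1
          ext
          show g⁻¹⁻¹ * x * g⁻¹ = g * x * g⁻¹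
          rw [inv_inv]
        rw [← h2]
        exact h1
      letI := Fintype.ofFinite ↥B
      have hWfix : ∀ i : Fin m, W i ≤ ⨅ (c : ↥B), LinearMap.ker ((ρ ((c : G))) - 1) := by
        intro i
        obtain ⟨v, hvW, hv0, hveig⟩ := hχ i
        have hfix : ∀ c : ↥B,
            (LinearMap.baseChange (AlgebraicClosure k) ((ρ ((c : G))) - 1)) v = 0 := by
          intro c
          obtain ⟨hcA, hcH⟩ := c.2
          have h1 := hveig ⟨(c : G), hcA⟩
          have h2 : χ i ⟨(c : G), hcA⟩ = 1 := hcH (χ i) (hχH i)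
          rw [h2] at h1
          rw [LinearMap.baseChange_sub]
          simp only [LinearMap.sub_apply]
          rw [h1, LinearMap.baseChange_one]
          simp
        have hvY := mem_baseChange_inf_iInf_ker (W i)
          (fun c : ↥B => (ρ ((c : G))) - 1) hvW hfix
        set Y := W i ⊓ ⨅ (c : ↥B), LinearMap.ker ((ρ ((c : G))) - 1) with hYdef
        have hYne : Y ≠ ⊥ := by
          intro h0
          rw [h0, Submodule.baseChange_bot] at hvY
          exact hv0 ((Submodule.mem_bot _).mp hvY)
        have hYstab : ∀ g : G, Submodule.map (ρ g) Y ≤ Y := by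
          rintro g _ ⟨y, hy, rfl⟩
          obtain ⟨hyW, hyF⟩ := Submodule.mem_inf.mp hy
          refine Submodule.mem_inf.mpr ⟨hstable g i ⟨y, hyW, rfl⟩, ?_⟩
          rw [Submodule.mem_iInf]
          intro c
          rw [LinearMap.mem_ker, LinearMap.sub_apply, Module.End.one_apply, sub_eq_zero]
          have hcB : g⁻¹ * (c : G) * g ∈ B := by
            have h := hBnormal.conj_mem (c : G) c.2 g⁻¹
            simpa using h
          have hyc : ρ (g⁻¹ * (c : G) * g) y = y := by
            have hy' := (Submodule.mem_iInf _).mp hyF ⟨g⁻¹ * (c : G) * g, hcB⟩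
            rw [LinearMap.mem_ker, LinearMap.sub_apply, Module.End.one_apply, sub_eq_zero] at hy'
            exact hy'
          have hmul : (c : G) * g = g * (g⁻¹ * (c : G) * g) := by group
          calc ρ (c : G) (ρ g y) = ρ ((c : G) * g) y := by rw [map_mul]; rfl
          _ = ρ g (ρ (g⁻¹ * (c : G) * g) y) := by rw [hmul, map_mul]; rfl
          _ = ρ g y := by rw [hyc]
        rcases (hirred i).2 Y inf_le_left hYstab with h0 | h0
        · exact absurd h0 hYne
        · rw [← h0]; exact inf_le_right
      have hBker : ∀ b ∈ B, ρ b = 1 := by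
        intro b hb
        apply LinearMap.ext
        intro x
        have hx : x ∈ ⨆ i, W i := hsup ▸ Submodule.mem_top
        show ρ b x = x
        refine Submodule.iSup_induction _ (motive := fun x => ρ b x = x) hx ?_ (map_zero _) ?_
        · intro i x hxW
          have h := (Submodule.mem_iInf _).mp (hWfix i hxW) ⟨b, hb⟩
          rw [LinearMap.mem_ker, LinearMap.sub_apply, Module.End.one_apply, sub_eq_zero] at h
          exact h
        · intro x y h1 h2
          rw [map_add, h1, h2]
      have hBbot : B = ⊥ := by
        rw [Subgroup.eq_bot_iff_forall]
        intro x hx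
        exact hker_bot x (hBker x hx)
      -- counting argument
      let ev : ↥(abSocle G) →* (↥H →* (AlgebraicClosure k)ˣ) :=
        { toFun := fun a =>
            { toFun := fun ℓ => (ℓ : ↥(abSocle G) →* (AlgebraicClosure k)ˣ) a
              map_one' := rfl
              map_mul' := fun ℓ₁ ℓ₂ => rfl }
          map_one' := by
            ext ℓ
            show ((ℓ : ↥(abSocle G) →* (AlgebraicClosure k)ˣ) 1 : AlgebraicClosure k) = _
            rw [map_one]
            rfl
          map_mul' := fun a b => by
            ext ℓ
            show ((ℓ : ↥(abSocle G) →* (AlgebraicClosure k)ˣ) (a * b) : AlgebraicClosure k) = _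
            rw [map_mul]
            rfl }
      have hev : Function.Injective ev := by
        rw [injective_iff_map_eq_one]
        intro a ha
        have haB : (a : G) ∈ B := by
          refine ⟨a.2, fun ℓ hℓ => ?_⟩
          have h := congrArg (fun f : ↥H →* (AlgebraicClosure k)ˣ => f (⟨ℓ, hℓ⟩ : ↥H)) ha
          exact h
        rw [hBbot, Subgroup.mem_bot] at haB
        exact Subtype.ext haB
      haveI : NeZero ((Monoid.exponent ↥H : AlgebraicClosure k)) := by
        constructor
        have h1 : Monoid.exponent ↥H ∣ Nat.card ↥H := Group.exponent_dvd_nat_card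
        have h2 : Nat.card ↥H ∣ Nat.card (↥(abSocle G) →* (AlgebraicClosure k)ˣ) :=
          Subgroup.card_subgroup_dvd_card H
        obtain ⟨c, hc⟩ := h1.trans (h2.trans (dvd_of_eq hcard_dual))
        intro h0
        apply hcardA
        rw [hc, Nat.cast_mul, h0, zero_mul]
      obtain ⟨eH⟩ := CommGroup.monoidHom_mulEquiv_of_hasEnoughRootsOfUnity
        (↥H) (AlgebraicClosure k)
      haveI : Finite (↥H →* (AlgebraicClosure k)ˣ) := Finite.of_equiv _ eH.symm.toEquiv
      have hle1 : Nat.card ↥(abSocle G) ≤ Nat.card (↥H →* (AlgebraicClosure k)ˣ) :=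
        Nat.card_le_card_of_injective ev hev
      have hcardH : Nat.card (↥H →* (AlgebraicClosure k)ˣ) = Nat.card ↥H :=
        Nat.card_congr eH.toEquiv
      have hle2 : Nat.card ↥H ≤ Nat.card (↥(abSocle G) →* (AlgebraicClosure k)ˣ) :=
        Nat.card_le_card_of_injective H.subtype H.subtype_injective
      refine Subgroup.eq_top_of_card_eq H ?_
      rw [hcard_dual]
      rw [hcardH] at hle1
      rw [hcard_dual] at hle2
      omega
    · -- no non-abelian foot in the kernel
      intro N hN _
      obtain ⟨a, haN, hane⟩ : ∃ a ∈ N, a ≠ 1 := by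
        by_contra hcon
        push_neg at hcon
        exact hN.2.1 ((Subgroup.eq_bot_iff_forall N).mpr hcon)
      exact ⟨a, haN, fun h => hane (hker_bot a h)⟩
  · rintro ⟨hHtop, hnab⟩
    refine (injective_iff_map_eq_one ρ).mpr ?_
    intro x hx
    by_contra hxne
    have hker_ne : kerρ ≠ ⊥ := fun h0 => hxne (Subgroup.mem_bot.mp (h0 ▸ (hx : x ∈ kerρ)))
    obtain ⟨N, hN, hNle⟩ := exists_foot_le kerρ hker_normal hker_ne
    by_cases hab : ∀ a ∈ N, ∀ b ∈ N, a * b = b * a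
    · have hNA : N ≤ abSocle G := abelian_foot_le_abSocle hN hab
      obtain ⟨a, haN, hane⟩ : ∃ a ∈ N, a ≠ 1 := by
        by_contra hcon
        push_neg at hcon
        exact hN.2.1 ((Subgroup.eq_bot_iff_forall N).mpr hcon)
      have haA := hNA haN
      obtain ⟨ψ, hψ⟩ := CommGroup.exists_apply_ne_one_of_hasEnoughRootsOfUnity
        (G := ↥(abSocle G)) (M := AlgebraicClosure k) (a := ⟨a, haA⟩)
        (fun h => hane (congrArg Subtype.val h))
      apply hψ
      have hψH : ψ ∈ H := hHtop ▸ Subgroup.mem_top ψ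
      exact hHker a haA (hNle haN) ψ hψH
    · obtain ⟨x', hx'N, hx'⟩ := hnab N hN hab
      exact hx' (hNle hx'N)
end

section
/- Let $A$ be a finitely generated abelian group generated by elements $a_1, \dotsc, a_n$. If the minimal number of generators of $A$ is strictly less than $n$, then there exist coprime integers $e_1, \dotsc, e_n$ (i.e., with $\gcd(e_1, \dotsc, e_n) = 1$) such that $\sum_{i=1}^n e_i a_i = 0$. -/
/-- If an abelian group is generated by `a₁, …, aₙ` but can be generated by fewer than
`n` elements, then there is a relation `∑ eᵢ aᵢ = 0` with coprime integer
coefficients. -/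
theorem exists_coprime_relation (A : Type) [AddCommGroup A] (n : ℕ) (a : Fin n → A)
    (hgen : AddSubgroup.closure (Set.range a) = ⊤)
    (hrank : ∃ S : Finset A, S.card < n ∧ AddSubgroup.closure (↑S : Set A) = ⊤) :
    ∃ e : Fin n → ℤ, Finset.univ.gcd e = 1 ∧ ∑ i, e i • a i = 0 := by
  obtain ⟨S, hcard, hS⟩ := hrank
  -- surjection ψ : ℤ^S → A
  set ψ : (↥S → ℤ) →ₗ[ℤ] A := Fintype.linearCombination ℤ (fun s : ↥S => (s : A))
  have hψ : Function.Surjective ψ := by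
    rw [← LinearMap.range_eq_top, Fintype.range_linearCombination,
      show (Set.range fun s : ↥S => (s:A)) = ↑S from Subtype.range_coe]
    have := Submodule.span_int_eq_addSubgroupClosure (M := A) (↑S : Set A)
    rw [hS] at this
    exact Submodule.toAddSubgroup_injective (by simpa using this)
  -- choose preimages of the aᵢ
  choose c hc using fun i => hψ (a i)
  set L : (Fin n → ℤ) →ₗ[ℤ] (↥S → ℤ) := Fintype.linearCombination ℤ c
  have hcomp : ∀ e : Fin n → ℤ, ψ (L e) = ∑ i, e i • a i := by
    intro e
    simp only [L, Fintype.linearCombination_apply, map_sum, map_smul]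
    exact Finset.sum_congr rfl fun i _ => by rw [hc]
  -- L is not injective since S.card < n
  have hLnotinj : ¬ Function.Injective L := by
    intro h
    have := LinearMap.finrank_le_finrank_of_injective h
    rw [Module.finrank_pi, Module.finrank_pi] at this
    simp [Fintype.card_coe] at this
    omega
  rw [← LinearMap.ker_eq_bot] at hLnotinj
  obtain ⟨x, hx, hx0⟩ := Submodule.ne_bot_iff _ |>.mp hLnotinj
  have hLx : L x = 0 := hx
  -- extract a coordinate where x is nonzero
  obtain ⟨i₀, hi₀⟩ : ∃ i, x i ≠ 0 := by
    by_contra h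
    push_neg at h
    exact hx0 (funext h)
  set g : ℤ := Finset.univ.gcd x
  have hg0 : g ≠ 0 := fun h => hi₀ (Finset.gcd_eq_zero_iff.mp h i₀ (Finset.mem_univ _))
  set e : Fin n → ℤ := fun i => x i / g
  have hgcd : Finset.univ.gcd e = 1 :=
    Finset.gcd_div_eq_one (Finset.mem_univ i₀) hi₀
  have hxe : g • e = x := by
    funext i
    exact Int.mul_ediv_cancel' (Finset.gcd_dvd (Finset.mem_univ i))
  have hLe : L e = 0 := by
    have : g • L e = 0 := by rw [← map_smul, hxe, hLx]
    rcases smul_eq_zero.mp this with h | h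
    · exact absurd h hg0
    · exact h
  refine ⟨e, hgcd, ?_⟩
  rw [← hcomp, hLe, map_zero]
end

section
/- Let $A$ be a finite abelian group generated by elements $c_1, \dotsc, c_n, h$, and suppose the minimal number of generators of $A$ is at most $n$. Then there exist integers $m_1, \dotsc, m_n$ such that $A$ is generated by $c_1 + m_1 h, \dotsc, c_n + m_n h$. -/
open Submodule Module

lemma la_lemma {K V : Type*} [Field K] [AddCommGroup V] [Module K V] [FiniteDimensional K V]
    {n : ℕ} (v : Fin n → V) (h : V)
    (hspan : span K (Set.range v ∪ {h}) = ⊤)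
    (hrk : finrank K V ≤ n) :
    ∃ m : Fin n → ℕ, (∀ i, m i ≤ 1) ∧
      span K (Set.range fun i => v i + m i • h) = ⊤ := by
  by_cases hc : span K (Set.range v) = ⊤
  · exact ⟨0, by simp, by simpa using hc⟩
  have hdep : ¬ LinearIndependent K v := by
    intro hind
    apply hc
    apply Submodule.eq_top_of_finrank_eq
    rw [finrank_span_eq_card hind]
    have h1 : finrank K (span K (Set.range v)) ≤ finrank K V := Submodule.finrank_le _
    rw [finrank_span_eq_card hind] at h1
    simpa using le_antisymm (by simpa using h1) (by simpa using hrk.trans (by simp [h1]))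
  rw [Fintype.linearIndependent_iff] at hdep
  push_neg at hdep
  obtain ⟨g, hg, j, hgj⟩ := hdep
  classical
  refine ⟨fun i => if i = j then 1 else 0, fun i => by by_cases hij : i = j <;> simp [hij], ?_⟩
  set w : Fin n → V := fun i => v i + (if i = j then 1 else 0 : ℕ) • h with hw
  have hvW : ∀ i, i ≠ j → v i ∈ span K (Set.range w) := by
    intro i hi
    have hwi : w i = v i := by simp [hw, hi]
    exact hwi ▸ subset_span (Set.mem_range_self i)
  have hvj : v j ∈ span K (Set.range w) := by
    have hsum0 : g j • v j + ∑ i ∈ Finset.univ.erase j, g i • v i = 0 := by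
      rw [Finset.add_sum_erase Finset.univ (fun i => g i • v i) (Finset.mem_univ j)]; exact hg
    have hsum_mem : (∑ i ∈ Finset.univ.erase j, g i • v i) ∈ span K (Set.range w) :=
      Submodule.sum_mem _ fun i hi =>
        Submodule.smul_mem _ _ (hvW i (Finset.ne_of_mem_erase hi))
    have heq : v j = (g j)⁻¹ • (-(∑ i ∈ Finset.univ.erase j, g i • v i)) := by
      rw [← eq_neg_of_add_eq_zero_left hsum0, inv_smul_smul₀ hgj]
    rw [heq]
    exact Submodule.smul_mem _ _ (Submodule.neg_mem _ hsum_mem)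
  have hh : h ∈ span K (Set.range w) := by
    have : h = w j - v j := by simp [hw]
    rw [this]
    exact Submodule.sub_mem _ (subset_span (Set.mem_range_self j)) hvj
  rw [eq_top_iff, ← hspan]
  apply span_le.mpr
  rintro x (⟨i, rfl⟩ | rfl)
  · by_cases hij : i = j
    · exact hij ▸ hvj
    · exact hvW i hij
  · exact hh

def psub (A : Type*) [AddCommGroup A] (p : ℕ) : AddSubgroup A where
  carrier := Set.range (fun a : A => p • a)
  add_mem' := by rintro _ _ ⟨a, rfl⟩ ⟨b, rfl⟩; exact ⟨a + b, smul_add p a b⟩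
  zero_mem' := ⟨0, smul_zero p⟩
  neg_mem' := by rintro _ ⟨a, rfl⟩; exact ⟨-a, smul_neg p a⟩

def pmod (A : Type) [AddCommGroup A] (p : ℕ) : Module (ZMod p) (A ⧸ psub A p) :=
  QuotientAddGroup.zmodModule (fun x => ⟨x, rfl⟩)

lemma mem_psub {A : Type*} [AddCommGroup A] {p : ℕ} {x : A} :
    x ∈ psub A p ↔ ∃ a, p • a = x := Iff.rfl

/-- Frattini-type argument: a subgroup `B` of a finite abelian group is everything provided
`B + pA = A` for every prime `p` dividing the order of `A`. -/
lemma frattini_arg {A : Type*} [AddCommGroup A] [Finite A] (B : AddSubgroup A)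
    (hB : ∀ p : ℕ, p.Prime → p ∣ Nat.card A → B ⊔ psub A p = ⊤) : B = ⊤ := by
  by_contra hne
  obtain ⟨a, ha⟩ : ∃ a : A, a ∉ B := by
    by_contra hall
    push_neg at hall
    exact hne (AddSubgroup.eq_top_iff' B |>.mpr hall)
  have hQnt : Nontrivial (A ⧸ B) := by
    refine ⟨QuotientAddGroup.mk a, 0, ?_⟩
    simpa [QuotientAddGroup.eq_zero_iff] using ha
  have hcard : Nat.card (A ⧸ B) ≠ 1 := by
    intro h1
    rcases Nat.card_eq_one_iff_unique.mp h1 with ⟨hsub, -⟩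
    exact false_of_nontrivial_of_subsingleton (A ⧸ B)
  obtain ⟨p, hp, hpd⟩ := Nat.exists_prime_and_dvd hcard
  haveI : Fact p.Prime := ⟨hp⟩
  have hpA : p ∣ Nat.card A := hpd.trans (AddSubgroup.card_quotient_dvd_card B)
  obtain ⟨x, hx⟩ := exists_prime_addOrderOf_dvd_card' (G := A ⧸ B) p hpd
  have hx0 : x ≠ 0 := by
    intro h0
    rw [h0, addOrderOf_zero] at hx
    exact hp.one_lt.ne' hx.symm
  have hpx : p • x = 0 := by rw [← hx]; exact addOrderOf_nsmul_eq_zero x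
  have hninj : ¬ Function.Injective (fun y : A ⧸ B => p • y) := by
    intro H
    exact hx0 (H (by simpa using hpx))
  have hnsurj : ¬ Function.Surjective (fun y : A ⧸ B => p • y) := fun H =>
    hninj (Finite.injective_iff_surjective.mpr H)
  rw [Function.Surjective] at hnsurj
  push_neg at hnsurj
  obtain ⟨y, hy⟩ := hnsurj
  obtain ⟨a', rfl⟩ := QuotientAddGroup.mk'_surjective B y
  have hmem : a' ∈ B ⊔ psub A p := by rw [hB p hp hpA]; trivial
  rw [AddSubgroup.mem_sup] at hmem
  obtain ⟨b, hb, z, hz, hsum⟩ := hmem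
  obtain ⟨w, rfl⟩ := hz
  refine hy (QuotientAddGroup.mk' B w) ?_
  have : QuotientAddGroup.mk' B a' = QuotientAddGroup.mk' B (b + p • w) := by rw [hsum]
  have hb0 : (QuotientAddGroup.mk' B) b = 0 := (QuotientAddGroup.eq_zero_iff b).mpr hb
  show p • (QuotientAddGroup.mk' B) w = _
  rw [this, map_add, map_nsmul, hb0, zero_add]

/-- Chinese remainder over a finset of primes. -/
lemma crt_primes (s : Finset ℕ) (hs : ∀ p ∈ s, p.Prime) (f : ℕ → ℕ) :
    ∃ z : ℕ, ∀ p ∈ s, z ≡ f p [MOD p] := by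
  classical
  induction s using Finset.induction with
  | empty => exact ⟨0, by simp⟩
  | @insert q t hq ih =>
    obtain ⟨z, hz⟩ := ih (fun p hp => hs p (Finset.mem_insert_of_mem hp))
    have hqp : q.Prime := hs q (Finset.mem_insert_self q t)
    have hcop : q.Coprime (∏ p ∈ t, p) :=
      Nat.Coprime.prod_right fun p hp =>
        (Nat.coprime_primes hqp (hs p (Finset.mem_insert_of_mem hp))).mpr
          (fun h => hq (h ▸ hp))
    obtain ⟨k, hk1, hk2⟩ := Nat.chineseRemainder hcop (f q) z
    refine ⟨k, fun p hp => ?_⟩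
    rcases Finset.mem_insert.mp hp with rfl | hp'
    · exact hk1
    · exact ((hk2.of_dvd (Finset.dvd_prod_of_mem _ hp'))).trans (hz p hp')

/-- For a `ZMod p`-module, the additive closure of a set is everything iff its span is. -/
lemma closure_eq_top_iff_span {p : ℕ} {M : Type*} [AddCommGroup M] [Module (ZMod p) M]
    (s : Set M) :
    AddSubgroup.closure s = ⊤ ↔ Submodule.span (ZMod p) s = ⊤ := by
  have h2 : Submodule.restrictScalars ℤ (Submodule.span (ZMod p) s) = Submodule.span ℤ s :=
    Submodule.restrictScalars_span ℤ (ZMod p)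
      (by rw [algebraMap_int_eq]; exact ZMod.intCast_surjective) s
  have hmem : ∀ x : M, x ∈ AddSubgroup.closure s ↔ x ∈ Submodule.span (ZMod p) s := by
    intro x
    rw [← Submodule.span_int_eq_addSubgroupClosure, ← h2]
    exact Iff.rfl
  constructor <;> intro ht
  · exact Submodule.eq_top_iff'.mpr fun x => (hmem x).mp (ht ▸ AddSubgroup.mem_top x)
  · exact AddSubgroup.eq_top_iff' _ |>.mpr fun x => (hmem x).mpr (ht ▸ Submodule.mem_top)



lemma key_prime {A : Type} [AddCommGroup A] [Finite A] {n : ℕ} (c : Fin n → A) (h : A)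
    (hgen : AddSubgroup.closure (Set.range c ∪ {h}) = ⊤)
    (S : Finset A) (hScard : S.card ≤ n) (hSgen : AddSubgroup.closure (↑S : Set A) = ⊤)
    (p : ℕ) (hp : p.Prime) :
    ∃ mp : Fin n → ℕ, (∀ i, mp i ≤ 1) ∧
      ∀ m : Fin n → ℤ, (∀ i, (m i : ZMod p) = ((mp i : ℕ) : ZMod p)) →
        AddSubgroup.closure (Set.range fun i => c i + m i • h) ⊔ psub A p = ⊤ := by
  classical
  haveI : Fact p.Prime := ⟨hp⟩
  letI instMod : Module (ZMod p) (A ⧸ psub A p) := pmod A p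
  set π := QuotientAddGroup.mk' (psub A p) with hπ
  have hπs : Function.Surjective π := QuotientAddGroup.mk'_surjective _
  have himg : ∀ s : Set A, AddSubgroup.closure s = ⊤ →
      AddSubgroup.closure (π '' s) = ⊤ := by
    intro s hs
    rw [← AddMonoidHom.map_closure, hs]
    exact AddSubgroup.map_top_of_surjective π hπs
  have hrank : finrank (ZMod p) (A ⧸ psub A p) ≤ n := by
    have hs : Submodule.span (ZMod p) (↑(S.image (⇑π : A → A ⧸ psub A p)) : Set (A ⧸ psub A p)) = (⊤ : Submodule (ZMod p) (A ⧸ psub A p)) := by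
      rw [← closure_eq_top_iff_span, Finset.coe_image]
      exact himg (↑S) hSgen
    have h1 := finrank_span_le_card (R := ZMod p) (↑(S.image (⇑π : A → A ⧸ psub A p)) : Set (A ⧸ psub A p))
    rw [hs, finrank_top, Finset.toFinset_coe] at h1
    exact h1.trans ((Finset.card_image_le).trans hScard)
  have hspan : span (ZMod p) (Set.range (π ∘ c) ∪ {π h}) = ⊤ := by
    rw [← closure_eq_top_iff_span]
    have := himg _ hgen
    rwa [Set.image_union, Set.image_singleton, ← Set.range_comp] at this
  obtain ⟨mp, hmp1, hmp⟩ := la_lemma (π ∘ c) (π h) hspan hrank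
  refine ⟨mp, hmp1, ?_⟩
  intro m hm
  have himgB : AddSubgroup.closure
      (π '' (Set.range fun i => c i + m i • h)) = ⊤ := by
    rw [closure_eq_top_iff_span (p := p)]
    have himg_eq : π '' (Set.range fun i => c i + m i • h)
        = Set.range (fun i => (π ∘ c) i + mp i • π h) := by
      rw [← Set.range_comp]
      refine congrArg Set.range (funext fun i => ?_)
      show π (c i + m i • h) = π (c i) + mp i • π h
      rw [map_add, map_zsmul]
      congr 1
      rw [← Int.cast_smul_eq_zsmul (ZMod p), hm i, Nat.cast_smul_eq_nsmul]
    rw [himg_eq]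
    exact hmp
  have hmapB : (AddSubgroup.closure (Set.range fun i => c i + m i • h)).map π = ⊤ := by
    rw [AddMonoidHom.map_closure]
    exact himgB
  have hker : π.ker = psub A p := QuotientAddGroup.ker_mk' _
  calc AddSubgroup.closure (Set.range fun i => c i + m i • h) ⊔ psub A p
      = AddSubgroup.closure (Set.range fun i => c i + m i • h) ⊔ π.ker := by rw [hker]
    _ = AddSubgroup.comap π ((AddSubgroup.closure (Set.range fun i => c i + m i • h)).map π) :=
        (AddSubgroup.comap_map_eq π _).symm
    _ = ⊤ := by rw [hmapB, AddSubgroup.comap_top]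


/-- If a finite abelian group `A` is generated by `c₁, …, cₙ, h` and can be generated
by at most `n` elements, then suitable modifications `cᵢ + mᵢ h` generate `A`. -/
theorem exists_generators_translate (A : Type) [AddCommGroup A] [Finite A]
    (n : ℕ) (c : Fin n → A) (h : A)
    (hgen : AddSubgroup.closure (Set.range c ∪ {h}) = ⊤)
    (hrank : ∃ S : Finset A, S.card ≤ n ∧ AddSubgroup.closure (↑S : Set A) = ⊤) :
    ∃ m : Fin n → ℤ,
      AddSubgroup.closure (Set.range fun i => c i + m i • h) = ⊤ := by
  classical
  obtain ⟨S, hScard, hSgen⟩ := hrank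
  have key := fun (p : ℕ) (hp : p.Prime) => key_prime c h hgen S hScard hSgen p hp
  set P := (Nat.card A).primeFactors with hP
  have hPp : ∀ p ∈ P, p.Prime := fun p hp => Nat.prime_of_mem_primeFactors hp
  let M : ℕ → Fin n → ℕ := fun p => if hp : p.Prime then (key p hp).choose else 0
  have hM : ∀ (p : ℕ) (hp : p.Prime), ∀ m : Fin n → ℤ,
      (∀ i, (m i : ZMod p) = ((M p i : ℕ) : ZMod p)) →
      AddSubgroup.closure (Set.range fun i => c i + m i • h) ⊔ psub A p = ⊤ := by
    intro p hp
    have : M p = (key p hp).choose := by simp only [M, dif_pos hp]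
    rw [this]
    exact (key p hp).choose_spec.2
  have hz : ∀ i : Fin n, ∃ z : ℕ, ∀ p ∈ P, z ≡ M p i [MOD p] := fun i =>
    crt_primes P hPp (fun p => M p i)
  choose z hzp using hz
  refine ⟨fun i => (z i : ℤ), ?_⟩
  apply frattini_arg
  intro p hp hpd
  have hcard0 : Nat.card A ≠ 0 := Nat.card_pos.ne'
  have hpP : p ∈ P := Nat.mem_primeFactors.mpr ⟨hp, hpd, hcard0⟩
  apply hM p hp
  intro i
  have hmod := hzp i p hpP
  have hnat : ((z i : ℕ) : ZMod p) = ((M p i : ℕ) : ZMod p) :=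
    (ZMod.natCast_eq_natCast_iff _ _ _).mpr hmod
  simpa using hnat
end

section
/- Let $G$ be a finite group whose every nontrivial normal subgroup intersects the center $Z(G)$ nontrivially (equivalently, $\operatorname{soc}(G) \subseteq Z(G)$), and suppose $\operatorname{soc}(G) = C$ is a $p$-group for a prime $p$. Let $k$ be a field with $\operatorname{char} k \neq p$. Then a completely reducible representation $V = V_1 \oplus \dotsb \oplus V_r$ of $G$ over $k$, with each $V_i$ irreducible acting on $C$ via the character $\chi_i \in C^* = \operatorname{Hom}(C, \bar{k}^*)$, is faithful if and only if $\chi_1, \dotsc, \chi_r$ generate $C^*$. -/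
open scoped TensorProduct

/-- The socle of `G`: the subgroup generated by all feet. -/
def socle (G : Type) [Group G] : Subgroup G :=
  ⨆ N ∈ {N : Subgroup G | IsFoot N}, N

section helpers

lemma foot_le_socle {G : Type} [Group G] {N : Subgroup G} (h : IsFoot N) : N ≤ socle G :=
  le_iSup₂ (f := fun (N : Subgroup G) (_ : N ∈ {N : Subgroup G | IsFoot N}) => N) N h

lemma exists_foot_le_s16 {G : Type} [Group G] [Finite G] {N : Subgroup G}
    (hN : N.Normal) (hbot : N ≠ ⊥) : ∃ M : Subgroup G, IsFoot M ∧ M ≤ N := by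
  have hwf : WellFoundedLT (Subgroup G) := inferInstance
  obtain ⟨M, hM, hmin⟩ := hwf.wf.has_min {M : Subgroup G | M.Normal ∧ M ≠ ⊥ ∧ M ≤ N}
    ⟨N, hN, hbot, le_rfl⟩
  refine ⟨M, ⟨hM.1, hM.2.1, fun M' h1 h2 h3 => ?_⟩, hM.2.2⟩
  by_contra hne
  exact hmin M' ⟨h1, h2, h3.trans hM.2.2⟩ (lt_of_le_of_ne h3 hne)

variable {k K : Type} [Field k] [Field K] [Algebra k K]

lemma one_tmul_injective (V : Type) [AddCommGroup V] [Module k V] :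
    Function.Injective (fun v : V => (1 : K) ⊗ₜ[k] v) := by
  obtain ⟨g, hg⟩ := (Algebra.linearMap k K).exists_leftInverse_of_injective
    (LinearMap.ker_eq_bot.mpr (algebraMap k K).injective)
  set r : K ⊗[k] V →ₗ[k] V := (TensorProduct.lid k V).toLinearMap ∘ₗ (g.rTensor V)
  have hr : ∀ v : V, r ((1 : K) ⊗ₜ[k] v) = v := by
    intro v
    have h1 : g 1 = 1 := by
      have := LinearMap.congr_fun hg 1
      simpa using this
    simp [r, h1]
  intro a b hab
  have := congrArg r hab
  simpa [hr] using this

lemma exp_cast_neZero {p : ℕ} (hp : p.Prime) (hpK : (p : K) ≠ 0)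
    (A : Type) [Group A] [Finite A] {n : ℕ} (hA : Nat.card A ∣ p ^ n) :
    NeZero ((Monoid.exponent A : K)) := by
  have : Fintype A := Fintype.ofFinite A
  have hdvd : Monoid.exponent A ∣ p ^ n := by
    refine dvd_trans ?_ hA
    rw [Nat.card_eq_fintype_card]
    exact Group.exponent_dvd_card
  obtain ⟨m, _, hm⟩ := (Nat.dvd_prime_pow hp).mp hdvd
  refine ⟨?_⟩
  rw [hm]
  push_cast
  exact pow_ne_zero _ hpK

lemma dual_subgroup_eq_top {p : ℕ} (hp : p.Prime) (hpK : (p : K) ≠ 0) [IsAlgClosed K]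
    (C : Type) [CommGroup C] [Finite C] {n : ℕ} (hC : Nat.card C = p ^ n)
    (H : Subgroup (C →* Kˣ)) (hker : ∀ c : C, (∀ φ ∈ H, φ c = 1) → c = 1) :
    H = ⊤ := by
  haveI := exp_cast_neZero hp hpK C (hC.dvd)
  haveI : HasEnoughRootsOfUnity K (Monoid.exponent C) := inferInstance
  -- the dual of C is isomorphic to C
  obtain ⟨e⟩ := CommGroup.monoidHom_mulEquiv_of_hasEnoughRootsOfUnity C K
  haveI : Finite (C →* Kˣ) := Finite.of_equiv C e.symm.toEquiv
  have hcardD : Nat.card (C →* Kˣ) = Nat.card C := Nat.card_eq_of_bijective e e.bijective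
  -- evaluation map C →* (H →* Kˣ)
  set ev : C →* (↥H →* Kˣ) :=
    { toFun := fun c => ((MonoidHom.eval c).comp H.subtype)
      map_one' := by ext φ; simp
      map_mul' := by intro a b; ext φ; simp } with hev
  have hinj : Function.Injective ev := by
    rw [injective_iff_map_eq_one]
    intro c hc
    refine hker c fun φ hφ => ?_
    have := DFunLike.congr_fun hc ⟨φ, hφ⟩
    simpa [hev] using this
  -- the dual of H is isomorphic to H
  have hHcard : Nat.card ↥H ∣ p ^ n := by
    have := Subgroup.card_subgroup_dvd_card H
    rw [hcardD, hC] at this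
    exact this
  haveI := exp_cast_neZero hp hpK ↥H hHcard
  haveI : HasEnoughRootsOfUnity K (Monoid.exponent ↥H) := inferInstance
  obtain ⟨eH⟩ := CommGroup.monoidHom_mulEquiv_of_hasEnoughRootsOfUnity ↥H K
  haveI : Finite (↥H →* Kˣ) := Finite.of_equiv ↥H eH.symm.toEquiv
  have h1 : Nat.card C ≤ Nat.card (↥H →* Kˣ) := Nat.card_le_card_of_injective ev hinj
  have h2 : Nat.card (↥H →* Kˣ) = Nat.card ↥H := Nat.card_eq_of_bijective eH eH.bijective
  have h3 : Nat.card ↥H ≤ Nat.card (C →* Kˣ) := Subgroup.card_le_card_group H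
  refine Subgroup.eq_top_of_card_eq H ?_
  omega

lemma dual_separates {p : ℕ} (hp : p.Prime) (hpK : (p : K) ≠ 0) [IsAlgClosed K]
    (C : Type) [CommGroup C] [Finite C] {n : ℕ} (hC : Nat.card C = p ^ n)
    {c : C} (hc : c ≠ 1) : ∃ φ : C →* Kˣ, φ c ≠ 1 := by
  haveI := exp_cast_neZero hp hpK C (hC.dvd)
  haveI : HasEnoughRootsOfUnity K (Monoid.exponent C) := inferInstance
  exact CommGroup.exists_apply_ne_one_of_hasEnoughRootsOfUnity C K hc

end helpers

/-- If `soc(G) = C` is a central `p`-subgroup and `char k ≠ p`, then a completely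
reducible representation `V = ⊕ Vᵢ` with each `Vᵢ` irreducible, on which `C` acts via
the character `χᵢ : C → k̄ˣ`, is faithful iff `χ₁, …, χ_r` generate `C*`. -/
theorem faithful_iff_central_socle_chars_generate (k : Type) [Field k] (p : ℕ)
    (hp : p.Prime) (hchar : ringChar k ≠ p) (G : Type) [Group G] [Finite G]
    (hcentral : socle G ≤ Subgroup.center G) (hpgroup : IsPGroup p (socle G))
    (V : Type) [AddCommGroup V] [Module k V] [FiniteDimensional k V]
    (ρ : Representation k G V)
    (r : ℕ) (W : Fin r → Submodule k V)
    (hindep : iSupIndep W) (hsup : (⨆ i, W i) = ⊤)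
    (hstable : ∀ (g : G) (i : Fin r), Submodule.map (ρ g) (W i) ≤ W i)
    (hirred : ∀ i, W i ≠ ⊥ ∧ ∀ U : Submodule k V, U ≤ W i →
      (∀ g : G, Submodule.map (ρ g) U ≤ U) → U = ⊥ ∨ U = W i)
    (χ : Fin r → (↥(socle G) →* (AlgebraicClosure k)ˣ))
    (hχ : ∀ (i : Fin r) (c : ↥(socle G)),
      ∀ v ∈ Submodule.baseChange (AlgebraicClosure k) (W i),
        LinearMap.baseChange (AlgebraicClosure k) (ρ (c : G)) v
          = (χ i c : AlgebraicClosure k) • v) :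
    Function.Injective ρ ↔ Subgroup.closure (Set.range χ) = ⊤ := by
  classical
  set K := AlgebraicClosure k with hK
  letI : CommGroup ↥(socle G) :=
    { (inferInstance : Group ↥(socle G)) with
      mul_comm := fun a b => Subtype.ext (by
        push_cast
        exact (Subgroup.mem_center_iff.mp (hcentral a.2) (b : G)).symm) }
  haveI : Fact p.Prime := ⟨hp⟩
  obtain ⟨n, hcard⟩ := hpgroup.exists_card_eq
  -- characteristic of K
  have hpK : (p : K) ≠ 0 := by
    intro h
    haveI : CharP K (ringChar k) :=
      charP_of_injective_algebraMap (algebraMap k K).injective (ringChar k)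
    have hdvd : ringChar k ∣ p := (CharP.cast_eq_zero_iff K (ringChar k) p).mp h
    rcases (Nat.Prime.eq_one_or_self_of_dvd hp _ hdvd) with h1 | h1
    · have : (1 : k) = 0 := by
        have := (ringChar.spec k 1).mpr (h1 ▸ dvd_refl (ringChar k))
        simpa using this
      exact one_ne_zero this
    · exact hchar h1
  -- key equivalence between vanishing of characters and triviality of ρ on c
  have key2 : ∀ c : ↥(socle G), (∀ i, χ i c = 1) → ρ (c : G) = 1 := by
    intro c hc
    have hfix : ∀ i, W i ≤ LinearMap.eqLocus (ρ (c : G)) (1 : Module.End k V) := by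
      intro i w hw
      have h1 := hχ i c ((1 : K) ⊗ₜ[k] w) (Submodule.tmul_mem_baseChange_of_mem 1 hw)
      rw [LinearMap.baseChange_tmul, hc i] at h1
      have h2 : (1 : K) ⊗ₜ[k] (ρ (c : G) w) = (1 : K) ⊗ₜ[k] w := by simpa using h1
      have := one_tmul_injective (k := k) (K := K) V h2
      simpa [LinearMap.mem_eqLocus] using this
    have htop : (⊤ : Submodule k V) ≤ LinearMap.eqLocus (ρ (c : G)) (1 : Module.End k V) := by
      rw [← hsup]
      exact iSup_le hfix
    ext v
    exact htop trivial
  have key1 : ∀ c : ↥(socle G), ρ (c : G) = 1 → ∀ i, χ i c = 1 := by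
    intro c hc i
    obtain ⟨w, hw, hw0⟩ := (Submodule.ne_bot_iff _).mp (hirred i).1
    have h1 := hχ i c ((1 : K) ⊗ₜ[k] w) (Submodule.tmul_mem_baseChange_of_mem 1 hw)
    rw [hc, LinearMap.baseChange_one] at h1
    have hv0 : (1 : K) ⊗ₜ[k] w ≠ 0 := by
      intro h
      exact hw0 (one_tmul_injective (k := k) (K := K) V (by simpa using h))
    have h2 : (((χ i c : K) - 1)) • ((1 : K) ⊗ₜ[k] w) = 0 := by
      have e : ((χ i c : K) - 1) • ((1 : K) ⊗ₜ[k] w) = (χ i c : K) • ((1 : K) ⊗ₜ[k] w) - (1 : K) • ((1 : K) ⊗ₜ[k] w) :=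
        @sub_smul K (K ⊗[k] V) _ _ TensorProduct.leftModule _ _ _
      rw [e, ← h1]
      simp
    rcases smul_eq_zero.mp h2 with h3 | h3
    · exact Units.ext (by simpa using sub_eq_zero.mp h3)
    · exact absurd h3 hv0
  constructor
  · intro hinj
    refine dual_subgroup_eq_top hp hpK (↥(socle G)) hcard (Subgroup.closure (Set.range χ)) ?_
    intro c hc
    have h1 : ∀ i, χ i c = 1 := fun i => hc (χ i) (Subgroup.subset_closure ⟨i, rfl⟩)
    have h2 : (c : G) = 1 := hinj (by rw [key2 c h1, map_one])
    exact Subtype.ext h2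
  · intro hcl a b hab
    by_contra hne
    have hg1 : a * b⁻¹ ≠ 1 := fun h => hne (mul_inv_eq_one.mp h)
    have hgker : ρ (a * b⁻¹) = 1 := by
      rw [map_mul, hab, ← map_mul, mul_inv_cancel, map_one]
    set N : Subgroup G :=
      { carrier := {x | ρ x = 1}
        one_mem' := map_one ρ
        mul_mem' := fun hx hy => by
          simp only [Set.mem_setOf_eq] at *
          rw [map_mul, hx, hy, one_mul]
        inv_mem' := fun {x} hx => by
          simp only [Set.mem_setOf_eq] at *
          have : ρ x⁻¹ * ρ x = 1 := by rw [← map_mul, inv_mul_cancel, map_one]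
          calc ρ x⁻¹ = ρ x⁻¹ * ρ x := by rw [hx, mul_one]
          _ = 1 := this } with hN
    have hNnormal : N.Normal := by
      constructor
      intro x hx g
      show ρ (g * x * g⁻¹) = 1
      have hx' : ρ x = 1 := hx
      rw [map_mul, map_mul, hx', mul_one, ← map_mul, mul_inv_cancel, map_one]
    have hNbot : N ≠ ⊥ := by
      intro h
      exact hg1 (by simpa [h, Subgroup.mem_bot] using show a * b⁻¹ ∈ N from hgker)
    obtain ⟨M, hfoot, hMN⟩ := exists_foot_le_s16 hNnormal hNbot
    obtain ⟨x, hx1⟩ := Subgroup.ne_bot_iff_exists_ne_one.mp hfoot.2.1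
    set c : ↥(socle G) := ⟨(x : G), foot_le_socle hfoot x.2⟩ with hcdef
    have hc1 : c ≠ 1 := fun h =>
      hx1 (Subtype.ext (show (x : G) = 1 from congrArg Subtype.val h))
    have hρc : ρ (c : G) = 1 := hMN x.2
    have hχc := key1 c hρc
    have hall : ∀ φ : ↥(socle G) →* Kˣ, φ c = 1 := by
      intro φ
      have hsub : Subgroup.closure (Set.range χ) ≤ (MonoidHom.eval c).ker := by
        rw [Subgroup.closure_le]
        rintro _ ⟨i, rfl⟩
        simpa [MonoidHom.mem_ker] using hχc i
      rw [hcl] at hsub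
      simpa [MonoidHom.mem_ker] using hsub (Subgroup.mem_top φ)
    obtain ⟨φ, hφ⟩ := dual_separates hp hpK (↥(socle G)) hcard hc1
    exact hφ (hall φ)
end
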